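/- For all positive constants β, E, δ, m, M, I there exists C₀ > 0 such that: for every T > 0, every p ∈ C¹([0,∞)) with m ≤ m_{p,T}, M_{p,T} ≤ M and I_{p,T} ≤ I, and every classical solution (v,u,θ) of the outer pressure problem on [0,1]×[0,T] with (E,δ)-bounded initial data, one has sup_{0≤t≤T} ∫₀¹ (u²/2 + (v − ln v) + (θ − ln θ))(x,t) dx + ∫₀ᵀ V(t) dt ≤ C₀. -/

import Mathlib

open MeasureTheory Set Filter

/-- The H¹(0,1) norm of a function `f` with (weak) derivative `f'`. -/
noncomputable def H1norm (f f' : ℝ → ℝ) : ℝ :=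
  Real.sqrt (∫ x in (0:ℝ)..1, ((f x) ^ 2 + (f' x) ^ 2))

/-- `p` is C¹ on `[0,∞)` with derivative `p'`, and `p` is positive there. -/
def PressureC1 (p p' : ℝ → ℝ) : Prop :=
  (∀ t ∈ Ici (0:ℝ), HasDerivWithinAt p (p' t) (Ici 0) t) ∧
  ContinuousOn p' (Ici 0) ∧ (∀ t ∈ Ici (0:ℝ), 0 < p t)

/-- Uniform pressure assumptions: `m ≤ p ≤ M` on `[0,∞)` and `∫₀^∞ |p'| ≤ I`. -/
def UniformPressure (p p' : ℝ → ℝ) (m M I : ℝ) : Prop :=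
  (∀ t ∈ Ici (0:ℝ), m ≤ p t ∧ p t ≤ M) ∧
  IntegrableOn (fun t => |p' t|) (Ici 0) ∧ (∫ t in Ici (0:ℝ), |p' t|) ≤ I

/-- `(E,δ)`-bounded initial data: the sum of the H¹ norms of `v₀, u₀, θ₀` is at most `E`
and `v₀ ≥ δ`, `θ₀ ≥ δ` on `[0,1]`.  (For a classical solution the spatial derivatives of
the initial data are `vx(·,0)`, `ux(·,0)`, `θx(·,0)`.) -/
def EdeltaBounded (E δ : ℝ) (v0 u0 θ0 : ℝ → ℝ) (vx ux θx : ℝ → ℝ → ℝ) : Prop :=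
  H1norm v0 (fun x => vx x 0) + H1norm u0 (fun x => ux x 0)
      + H1norm θ0 (fun x => θx x 0) ≤ E ∧
  (∀ x ∈ Icc (0:ℝ) 1, δ ≤ v0 x) ∧ (∀ x ∈ Icc (0:ℝ) 1, δ ≤ θ0 x)

/-- A classical solution `(v,u,θ)` of the outer pressure problem for the 1-D compressible
Navier–Stokes system on `[0,1] × Tset` (with `Tset = Icc 0 T` or `Tset = Ici 0`),
with heat conductivity `θ^β`, pressure boundary data `p`, and initial data `(v₀,u₀,θ₀)`.
The functions `vx, vt, ux, ut, uxx, θx, θt, θxx` are the corresponding partial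
derivatives. -/
structure OPSol (β : ℝ) (Tset : Set ℝ) (p v0 u0 θ0 : ℝ → ℝ)
    (v u θ vx vt ux ut uxx θx θt θxx : ℝ → ℝ → ℝ) : Prop where
  v_pos : ∀ x ∈ Icc (0:ℝ) 1, ∀ t ∈ Tset, 0 < v x t
  θ_pos : ∀ x ∈ Icc (0:ℝ) 1, ∀ t ∈ Tset, 0 < θ x t
  cont_v : ContinuousOn (fun q : ℝ × ℝ => v q.1 q.2) (Icc 0 1 ×ˢ Tset)
  cont_u : ContinuousOn (fun q : ℝ × ℝ => u q.1 q.2) (Icc 0 1 ×ˢ Tset)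
  cont_θ : ContinuousOn (fun q : ℝ × ℝ => θ q.1 q.2) (Icc 0 1 ×ˢ Tset)
  cont_vx : ContinuousOn (fun q : ℝ × ℝ => vx q.1 q.2) (Icc 0 1 ×ˢ Tset)
  cont_vt : ContinuousOn (fun q : ℝ × ℝ => vt q.1 q.2) (Icc 0 1 ×ˢ Tset)
  cont_ux : ContinuousOn (fun q : ℝ × ℝ => ux q.1 q.2) (Icc 0 1 ×ˢ Tset)
  cont_ut : ContinuousOn (fun q : ℝ × ℝ => ut q.1 q.2) (Icc 0 1 ×ˢ Tset)
  cont_uxx : ContinuousOn (fun q : ℝ × ℝ => uxx q.1 q.2) (Icc 0 1 ×ˢ Tset)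
  cont_θx : ContinuousOn (fun q : ℝ × ℝ => θx q.1 q.2) (Icc 0 1 ×ˢ Tset)
  cont_θt : ContinuousOn (fun q : ℝ × ℝ => θt q.1 q.2) (Icc 0 1 ×ˢ Tset)
  cont_θxx : ContinuousOn (fun q : ℝ × ℝ => θxx q.1 q.2) (Icc 0 1 ×ˢ Tset)
  hvx : ∀ t ∈ Tset, ∀ x ∈ Icc (0:ℝ) 1, HasDerivWithinAt (fun y => v y t) (vx x t) (Icc 0 1) x
  hvt : ∀ x ∈ Icc (0:ℝ) 1, ∀ t ∈ Tset, HasDerivWithinAt (fun s => v x s) (vt x t) Tset t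
  hux : ∀ t ∈ Tset, ∀ x ∈ Icc (0:ℝ) 1, HasDerivWithinAt (fun y => u y t) (ux x t) (Icc 0 1) x
  hut : ∀ x ∈ Icc (0:ℝ) 1, ∀ t ∈ Tset, HasDerivWithinAt (fun s => u x s) (ut x t) Tset t
  huxx : ∀ t ∈ Tset, ∀ x ∈ Icc (0:ℝ) 1, HasDerivWithinAt (fun y => ux y t) (uxx x t) (Icc 0 1) x
  hθx : ∀ t ∈ Tset, ∀ x ∈ Icc (0:ℝ) 1, HasDerivWithinAt (fun y => θ y t) (θx x t) (Icc 0 1) x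
  hθt : ∀ x ∈ Icc (0:ℝ) 1, ∀ t ∈ Tset, HasDerivWithinAt (fun s => θ x s) (θt x t) Tset t
  hθxx : ∀ t ∈ Tset, ∀ x ∈ Icc (0:ℝ) 1, HasDerivWithinAt (fun y => θx y t) (θxx x t) (Icc 0 1) x
  /-- (i)  v_t = u_x -/
  eq_mass : ∀ x ∈ Icc (0:ℝ) 1, ∀ t ∈ Tset, vt x t = ux x t
  /-- (ii)  u_t = ((u_x − θ)/v)_x -/
  eq_mom : ∀ t ∈ Tset, ∀ x ∈ Icc (0:ℝ) 1,
    HasDerivWithinAt (fun y => (ux y t - θ y t) / v y t) (ut x t) (Icc 0 1) x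
  /-- (iii)  θ_t + (θ/v) u_x = ((θ^β θ_x)/v)_x + u_x²/v -/
  eq_energy : ∀ t ∈ Tset, ∀ x ∈ Icc (0:ℝ) 1, ∃ q : ℝ,
    HasDerivWithinAt (fun y => θ y t ^ β * θx y t / v y t) q (Icc 0 1) x ∧
    θt x t + θ x t / v x t * ux x t = q + (ux x t) ^ 2 / v x t
  bc_left : ∀ t ∈ Tset, (ux 0 t - θ 0 t) / v 0 t = -p t
  bc_right : ∀ t ∈ Tset, (ux 1 t - θ 1 t) / v 1 t = -p t
  bc_θ_left : ∀ t ∈ Tset, θx 0 t = 0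
  bc_θ_right : ∀ t ∈ Tset, θx 1 t = 0
  init_v : ∀ x ∈ Icc (0:ℝ) 1, v x 0 = v0 x
  init_u : ∀ x ∈ Icc (0:ℝ) 1, u x 0 = u0 x
  init_θ : ∀ x ∈ Icc (0:ℝ) 1, θ x 0 = θ0 x
  v0_pos : ∃ c > 0, ∀ x ∈ Icc (0:ℝ) 1, c ≤ v0 x
  θ0_pos : ∃ c > 0, ∀ x ∈ Icc (0:ℝ) 1, c ≤ θ0 x
  u0_mean : (∫ x in (0:ℝ)..1, u0 x) = 0

/-!
Multiplying the momentum equation by `u` and combining the temperature equation with the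
time derivatives of `log θ` and `log v` gives the pointwise balance
`∂ₜ e = ∂ₓ F + p' v - D` for `e = u²/2 + (θ - log θ) + (p v - log v)`, where `D ≥ 0` is the
dissipation of the statement and the flux `F = u ((u_x - θ)/v + p) + θ^β θ_x / v (1 - 1/θ)`
vanishes at `x = 0, 1` by the boundary conditions. Integrating over `[0,1] × [0,t]`,
`∫e(t) + ∫₀ᵗ∫D = ∫e(0) + ∫₀ᵗ p' ∫v`. As `p ≥ m`, `∫e(t)` dominates `(m/2) ∫v(t)`, so Grönwall's
inequality with the weight `|p'|`, whose integral is at most `I`, bounds `∫v`, and with it the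
energy and the dissipation. The initial energy is controlled by the `H¹` norms and by `δ`.
-/

open Real intervalIntegral

theorem integral_eq_sub_of_hasDerivWithinAt_Icc {f f' : ℝ → ℝ} {a b : ℝ} (hab : a ≤ b)
    (hf : ∀ x ∈ Icc a b, HasDerivWithinAt f (f' x) (Icc a b) x)
    (hf' : ContinuousOn f' (Icc a b)) : ∫ x in a..b, f' x = f b - f a :=
  integral_eq_sub_of_hasDeriv_right_of_le hab (fun x hx => (hf x hx).continuousWithinAt)
    (fun x hx => (hf x (Ioo_subset_Icc_self hx)).mono_of_mem_nhdsWithin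
      (Icc_mem_nhdsGT_of_mem ⟨hx.1.le, hx.2⟩)) (hf'.intervalIntegrable_of_Icc hab)

theorem hasDerivWithinAt_integral_Icc {f : ℝ → ℝ} {a b s : ℝ} (hs : s ∈ Icc a b)
    (hf : ContinuousOn f (Icc a b)) :
    HasDerivWithinAt (fun t => ∫ x in a..t, f x) (f s) (Icc a b) s :=
  have : Fact (s ∈ Icc a b) := ⟨hs⟩
  integral_hasDerivWithinAt_right
    ((hf.mono (Icc_subset_Icc le_rfl hs.2)).intervalIntegrable_of_Icc hs.1)
    ⟨Icc a b, self_mem_nhdsWithin, hf.aestronglyMeasurable measurableSet_Icc⟩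
    (hf.continuousWithinAt hs)

theorem continuousOn_intervalIntegral_of_continuousOn_prod {F : ℝ → ℝ → ℝ} {a b c d : ℝ}
    (hab : a ≤ b) (hcd : c ≤ d) (hF : ContinuousOn (Function.uncurry F) (Icc a b ×ˢ Icc c d)) :
    ContinuousOn (fun y => ∫ x in a..b, F x y) (Icc c d) := by
  have hG : Continuous (Function.uncurry fun y x => F (projIcc a b hab x) (projIcc c d hcd y)) :=
    hF.comp_continuous
      (f := fun q : ℝ × ℝ => ((projIcc a b hab q.2 : ℝ), (projIcc c d hcd q.1 : ℝ))) (by fun_prop)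
      fun q => ⟨Subtype.prop _, Subtype.prop _⟩
  refine (continuous_parametric_intervalIntegral_of_continuous' hG a b).continuousOn.congr
    fun y hy => integral_congr fun x hx => ?_
  rw [uIcc_of_le hab] at hx
  simp [projIcc_of_mem _ hx, projIcc_of_mem _ hy]

theorem intervalIntegral_swap_of_continuousOn {F : ℝ → ℝ → ℝ} {a b c d : ℝ} (hab : a ≤ b)
    (hcd : c ≤ d) (hF : ContinuousOn (Function.uncurry F) (Icc a b ×ˢ Icc c d)) :
    ∫ x in a..b, ∫ y in c..d, F x y = ∫ y in c..d, ∫ x in a..b, F x y := by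
  refine intervalIntegral_intervalIntegral_swap
    ((hF.integrableOn_compact (isCompact_Icc.prod isCompact_Icc)).mono_set ?_)
  rw [uIoc_of_le hab, uIoc_of_le hcd]
  exact prod_mono Ioc_subset_Icc_self Ioc_subset_Icc_self

theorem add_mul_integral_le_mul_exp_of_le_add_mul_integral {W q : ℝ → ℝ} {a b B c : ℝ}
    (hc : 0 ≤ c) (hW : ContinuousOn W (Icc a b)) (hq : ContinuousOn q (Icc a b))
    (hq₀ : ∀ s ∈ Icc a b, 0 ≤ q s)
    (hWle : ∀ s ∈ Icc a b, W s ≤ B + c * ∫ σ in a..s, q σ * W σ) {t : ℝ} (ht : t ∈ Icc a b) :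
    B + c * ∫ s in a..t, q s * W s ≤ B * exp (c * ∫ s in a..t, q s) := by
  set J := fun τ => ∫ s in a..τ, q s * W s
  set H := fun τ => ∫ s in a..τ, q s
  set φ := fun τ => (B + c * J τ) * exp (-(c * H τ))
  have hφ : ∀ s ∈ Icc a b, HasDerivWithinAt φ
      (c * q s * (W s - (B + c * J s)) * exp (-(c * H s))) (Icc a b) s := by
    intro s hs
    have hJ := hasDerivWithinAt_integral_Icc (f := fun s => q s * W s) hs (hq.mul hW)
    have hH := hasDerivWithinAt_integral_Icc hs hq
    refine (((hJ.const_mul c).const_add B).mul (hH.const_mul c).neg.exp).congr_deriv ?_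
    simp only [Pi.neg_apply, J, H]
    ring
  have hφ_anti : AntitoneOn φ (Icc a b) := by
    refine antitoneOn_of_hasDerivWithinAt_nonpos (convex_Icc a b)
      (fun s hs => (hφ s hs).continuousWithinAt)
      (fun s hs => (hφ s (interior_subset hs)).mono interior_subset) fun s hs => ?_
    have hs' := interior_subset hs
    exact mul_nonpos_of_nonpos_of_nonneg (mul_nonpos_of_nonneg_of_nonpos
      (mul_nonneg hc (hq₀ s hs')) (sub_nonpos.2 (hWle s hs'))) (exp_pos _).le
  have hφt : φ t ≤ φ a := hφ_anti (left_mem_Icc.2 (ht.1.trans ht.2)) ht ht.1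
  simp only [φ, J, H, integral_same, mul_zero, add_zero, neg_zero, exp_zero, mul_one] at hφt
  calc B + c * J t = (B + c * J t) * exp (-(c * H t)) * exp (c * H t) := by
        rw [mul_assoc, ← exp_add, neg_add_cancel, exp_zero, mul_one]
    _ ≤ B * exp (c * H t) := mul_le_mul_of_nonneg_right hφt (exp_pos _).le

/-- `𝓔` stands for the energy `∫ e`, `W` for `∫ v`, `Λ` for the accumulated dissipation and
`q` for `p'`. -/
theorem energy_bound_of_identity {𝓔 W Λ q : ℝ → ℝ} {T m L A I : ℝ} (hm : 0 < m)
    (hW : ContinuousOn W (Icc 0 T)) (hq : ContinuousOn q (Icc 0 T))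
    (hW₀ : ∀ s ∈ Icc 0 T, 0 ≤ W s) (hΛ : ∀ s ∈ Icc 0 T, 0 ≤ Λ s)
    (hid : ∀ s ∈ Icc 0 T, 𝓔 s + Λ s = 𝓔 0 + ∫ σ in (0:ℝ)..s, q σ * W σ)
    (hlow : ∀ s ∈ Icc 0 T, m / 2 * W s + L ≤ 𝓔 s) (hA : 𝓔 0 ≤ A)
    (hI : ∫ s in (0:ℝ)..T, |q s| ≤ I) {t : ℝ} (ht : t ∈ Icc 0 T) :
    𝓔 t + W t + Λ T ≤ L + (m + 1) * (|2 / m * (A - L)| * exp (2 / m * I)) := by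
  set c := 2 / m
  set B := c * (A - L)
  set G := |B| * exp (c * I)
  set J := fun s => ∫ σ in (0:ℝ)..s, |q σ| * W σ
  have hc : 0 < c := div_pos two_pos hm
  have hcm : c * (m / 2) = 1 := by simp only [c]; field_simp
  have hT : T ∈ Icc 0 T := right_mem_Icc.2 (ht.1.trans ht.2)
  have hsub : ∀ s ∈ Icc (0:ℝ) T, Icc 0 s ⊆ Icc 0 T := fun s hs => Icc_subset_Icc le_rfl hs.2
  have hqW : ∀ s ∈ Icc 0 T, ∫ σ in (0:ℝ)..s, q σ * W σ ≤ J s := fun s hs =>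
    intervalIntegral.integral_mono_on hs.1
      (((hq.mul hW).mono (hsub s hs)).intervalIntegrable_of_Icc hs.1)
      (((hq.abs.mul hW).mono (hsub s hs)).intervalIntegrable_of_Icc hs.1)
      fun σ hσ => mul_le_mul_of_nonneg_right (le_abs_self _) (hW₀ σ (hsub s hs hσ))
  have h𝓔 : ∀ s ∈ Icc 0 T, 𝓔 s + Λ s ≤ A + J s := fun s hs => by
    linarith [hid s hs, hqW s hs]
  have hWJ : ∀ s ∈ Icc 0 T, W s ≤ B + c * J s := fun s hs =>
    calc W s = c * (m / 2 * W s) := by rw [← mul_assoc, hcm, one_mul]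
      _ ≤ c * (A - L + J s) := by
        gcongr
        linarith [h𝓔 s hs, hlow s hs, hΛ s hs]
      _ = B + c * J s := by ring
  have hJG : ∀ s ∈ Icc 0 T, B + c * J s ≤ G := fun s hs => by
    have hqI : ∫ σ in (0:ℝ)..s, |q σ| ≤ I :=
      (intervalIntegral.integral_mono_interval le_rfl hs.1 hs.2
        (Eventually.of_forall fun σ => abs_nonneg (q σ))
        (hq.abs.intervalIntegrable_of_Icc hT.1)).trans hI
    calc B + c * J s ≤ B * exp (c * ∫ σ in (0:ℝ)..s, |q σ|) :=
          add_mul_integral_le_mul_exp_of_le_add_mul_integral hc.le hW hq.abs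
            (fun σ _ => abs_nonneg (q σ)) hWJ hs
      _ ≤ G := mul_le_mul (le_abs_self B) (exp_le_exp.2 (by gcongr)) (exp_pos _).le
          (abs_nonneg B)
  have hJ : ∀ s ∈ Icc 0 T, J s ≤ m / 2 * (G - B) := fun s hs =>
    calc J s = m / 2 * (c * J s) := by rw [← mul_assoc, mul_comm (m / 2), hcm, one_mul]
      _ ≤ m / 2 * (G - B) := by gcongr; linarith [hJG s hs]
  have hmB : m / 2 * B = A - L := by rw [← mul_assoc, mul_comm (m / 2), hcm, one_mul]
  have hWT := mul_nonneg (half_pos hm).le (hW₀ T hT)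
  linarith [h𝓔 t ht, hΛ t ht, hWJ t ht, hJG t ht, hJ t ht, h𝓔 T hT, hJ T hT, hlow T hT]

theorem integral_sq_le_sq_of_H1norm_le {f f' : ℝ → ℝ} {E : ℝ} (hf : ContinuousOn f (Icc 0 1))
    (hf' : ContinuousOn f' (Icc 0 1)) (hE : H1norm f f' ≤ E) :
    ∫ x in (0:ℝ)..1, f x ^ 2 ≤ E ^ 2 := by
  have hsq : H1norm f f' ^ 2 = (∫ x in (0:ℝ)..1, f x ^ 2) + ∫ x in (0:ℝ)..1, f' x ^ 2 := by
    rw [H1norm, sq_sqrt (intervalIntegral.integral_nonneg zero_le_one fun x _ => by positivity),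
      intervalIntegral.integral_add (f := fun x => f x ^ 2) (g := fun x => f' x ^ 2)
        ((hf.pow 2).intervalIntegrable_of_Icc zero_le_one)
        ((hf'.pow 2).intervalIntegrable_of_Icc zero_le_one)]
  have hf'₀ : 0 ≤ ∫ x in (0:ℝ)..1, f' x ^ 2 :=
    intervalIntegral.integral_nonneg zero_le_one fun x _ => sq_nonneg (f' x)
  have h : H1norm f f' ^ 2 ≤ E ^ 2 := pow_le_pow_left₀ (sqrt_nonneg _) hE 2
  linarith

theorem H1norm_congr {f g f' : ℝ → ℝ} (h : EqOn f g (Icc 0 1)) : H1norm f f' = H1norm g f' := by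
  unfold H1norm
  congr 1
  refine integral_congr fun x hx => ?_
  rw [uIcc_of_le zero_le_one] at hx
  simp only [h hx]

noncomputable def energyDensity (p : ℝ → ℝ) (v u θ : ℝ → ℝ → ℝ) (x t : ℝ) : ℝ :=
  u x t ^ 2 / 2 + (θ x t - log (θ x t)) + (p t * v x t - log (v x t))

noncomputable def energyRate (p p' : ℝ → ℝ) (v u θ vt ut θt : ℝ → ℝ → ℝ) (x t : ℝ) : ℝ :=
  u x t * ut x t + (θt x t - θt x t / θ x t) + (p' t * v x t + p t * vt x t - vt x t / v x t)

noncomputable def dissipation (β : ℝ) (v θ ux θx : ℝ → ℝ → ℝ) (x t : ℝ) : ℝ :=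
  θ x t ^ β * θx x t ^ 2 / (v x t * θ x t ^ 2) + ux x t ^ 2 / (v x t * θ x t)

noncomputable def energyFlux (β : ℝ) (p : ℝ → ℝ) (v u θ ux θx : ℝ → ℝ → ℝ) (x t : ℝ) : ℝ :=
  u x t * ((ux x t - θ x t) / v x t + p t) + θ x t ^ β * θx x t / v x t * (1 - (θ x t)⁻¹)

theorem PressureC1.continuousOn {p p' : ℝ → ℝ} (hP : PressureC1 p p') : ContinuousOn p (Ici 0) :=
  fun t ht => (hP.1 t ht).continuousWithinAt

theorem le_energyDensity {p : ℝ → ℝ} {v u θ : ℝ → ℝ → ℝ} {m x t : ℝ} (hm : 0 < m)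
    (hp : m ≤ p t) (hv : 0 < v x t) (hθ : 0 < θ x t) :
    m / 2 * v x t + (2 + log (m / 2)) ≤ energyDensity p v u θ x t := by
  have hlogθ := log_le_sub_one_of_pos hθ
  have hlogv := log_le_sub_one_of_pos (mul_pos (half_pos hm) hv)
  rw [log_mul (half_pos hm).ne' hv.ne'] at hlogv
  have hpv := mul_le_mul_of_nonneg_right hp hv.le
  have hu := sq_nonneg (u x t)
  unfold energyDensity
  linarith

theorem energyDensity_le {p : ℝ → ℝ} {v u θ : ℝ → ℝ → ℝ} {δ M x t : ℝ} (hδ : 0 < δ)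
    (hv : δ ≤ v x t) (hθ : δ ≤ θ x t) (hp : 0 ≤ p t) (hpM : p t ≤ M) :
    energyDensity p v u θ x t ≤
      u x t ^ 2 / 2 + θ x t ^ 2 / 2 + M / 2 * v x t ^ 2 + ((1 + M) / 2 - 2 * log δ) := by
  have hlogv := log_le_log hδ hv
  have hlogθ := log_le_log hδ hθ
  have hpv := mul_le_mul_of_nonneg_right hpM (hδ.le.trans hv)
  unfold energyDensity
  nlinarith [sq_nonneg (θ x t - 1), mul_nonneg (hp.trans hpM) (sq_nonneg (v x t - 1))]

theorem dissipation_nonneg {β : ℝ} {v θ ux θx : ℝ → ℝ → ℝ} {x t : ℝ} (hv : 0 < v x t)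
    (hθ : 0 < θ x t) : 0 ≤ dissipation β v θ ux θx x t := by
  unfold dissipation
  positivity

namespace OPSol

variable {β T : ℝ} {p p' v0 u0 θ0 : ℝ → ℝ} {v u θ vx vt ux ut uxx θx θt θxx : ℝ → ℝ → ℝ}

theorem v_ne_zero (sol : OPSol β (Icc 0 T) p v0 u0 θ0 v u θ vx vt ux ut uxx θx θt θxx) :
    ∀ q ∈ Icc (0:ℝ) 1 ×ˢ Icc 0 T, v q.1 q.2 ≠ 0 :=
  fun q hq => (sol.v_pos q.1 hq.1 q.2 hq.2).ne'

theorem θ_ne_zero (sol : OPSol β (Icc 0 T) p v0 u0 θ0 v u θ vx vt ux ut uxx θx θt θxx) :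
    ∀ q ∈ Icc (0:ℝ) 1 ×ˢ Icc 0 T, θ q.1 q.2 ≠ 0 :=
  fun q hq => (sol.θ_pos q.1 hq.1 q.2 hq.2).ne'

theorem continuousOn_energyDensity
    (sol : OPSol β (Icc 0 T) p v0 u0 θ0 v u θ vx vt ux ut uxx θx θt θxx) {t : ℝ}
    (ht : t ∈ Icc 0 T) : ContinuousOn (fun x => energyDensity p v u θ x t) (Icc 0 1) := by
  have hu : ContinuousOn (fun x => u x t) (Icc 0 1) := sol.cont_u.uncurry_right t ht
  have hv : ContinuousOn (fun x => v x t) (Icc 0 1) := sol.cont_v.uncurry_right t ht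
  have hθ : ContinuousOn (fun x => θ x t) (Icc 0 1) := sol.cont_θ.uncurry_right t ht
  have hv₀ : ∀ x ∈ Icc (0:ℝ) 1, v x t ≠ 0 := fun x hx => (sol.v_pos x hx t ht).ne'
  have hθ₀ : ∀ x ∈ Icc (0:ℝ) 1, θ x t ≠ 0 := fun x hx => (sol.θ_pos x hx t ht).ne'
  unfold energyDensity
  fun_prop (disch := assumption)

theorem continuousOn_energyRate
    (sol : OPSol β (Icc 0 T) p v0 u0 θ0 v u θ vx vt ux ut uxx θx θt θxx)
    (hP : PressureC1 p p') :
    ContinuousOn (Function.uncurry (energyRate p p' v u θ vt ut θt)) (Icc 0 1 ×ˢ Icc 0 T) := by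
  have hp : ContinuousOn p (Icc 0 T) := hP.continuousOn.mono Icc_subset_Ici_self
  have hp' : ContinuousOn p' (Icc 0 T) := hP.2.1.mono Icc_subset_Ici_self
  have := sol.cont_u; have := sol.cont_v; have := sol.cont_θ
  have := sol.cont_ut; have := sol.cont_vt; have := sol.cont_θt
  have := sol.v_ne_zero; have := sol.θ_ne_zero
  unfold energyRate
  fun_prop (disch := first | assumption | exact mapsTo_snd_prod | norm_num)

theorem continuousOn_dissipation
    (sol : OPSol β (Icc 0 T) p v0 u0 θ0 v u θ vx vt ux ut uxx θx θt θxx) :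
    ContinuousOn (Function.uncurry (dissipation β v θ ux θx)) (Icc 0 1 ×ˢ Icc 0 T) := by
  have := sol.cont_v; have := sol.cont_θ; have := sol.cont_ux; have := sol.cont_θx
  have := sol.v_ne_zero; have := sol.θ_ne_zero
  have hθβ : ContinuousOn (fun q : ℝ × ℝ => θ q.1 q.2 ^ β) (Icc 0 1 ×ˢ Icc 0 T) :=
    sol.cont_θ.rpow_const fun q hq => Or.inl (sol.θ_ne_zero q hq)
  have hvθ : ∀ q ∈ Icc (0:ℝ) 1 ×ˢ Icc 0 T, v q.1 q.2 * θ q.1 q.2 ≠ 0 :=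
    fun q hq => mul_ne_zero (sol.v_ne_zero q hq) (sol.θ_ne_zero q hq)
  have hvθ2 : ∀ q ∈ Icc (0:ℝ) 1 ×ˢ Icc 0 T, v q.1 q.2 * θ q.1 q.2 ^ 2 ≠ 0 :=
    fun q hq => mul_ne_zero (sol.v_ne_zero q hq) (pow_ne_zero _ (sol.θ_ne_zero q hq))
  unfold dissipation
  fun_prop (disch := assumption)

theorem hasDerivWithinAt_energyDensity
    (sol : OPSol β (Icc 0 T) p v0 u0 θ0 v u θ vx vt ux ut uxx θx θt θxx)
    (hP : PressureC1 p p') {x s : ℝ} (hx : x ∈ Icc (0:ℝ) 1) (hs : s ∈ Icc 0 T) :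
    HasDerivWithinAt (energyDensity p v u θ x) (energyRate p p' v u θ vt ut θt x s)
      (Icc 0 T) s := by
  have hp : HasDerivWithinAt p (p' s) (Icc 0 T) s := (hP.1 s hs.1).mono Icc_subset_Ici_self
  have hu := sol.hut x hx s hs
  have hv := sol.hvt x hx s hs
  have hθ := sol.hθt x hx s hs
  exact ((((hu.fun_pow 2).div_const 2).add (hθ.sub (hθ.log (sol.θ_pos x hx s hs).ne'))).add
    ((hp.mul hv).sub (hv.log (sol.v_pos x hx s hs).ne'))).congr_deriv
    (by simp only [energyRate]; ring)

theorem energyFlux_zero (sol : OPSol β (Icc 0 T) p v0 u0 θ0 v u θ vx vt ux ut uxx θx θt θxx)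
    {s : ℝ} (hs : s ∈ Icc 0 T) : energyFlux β p v u θ ux θx 0 s = 0 := by
  simp [energyFlux, sol.bc_left s hs, sol.bc_θ_left s hs]

theorem energyFlux_one (sol : OPSol β (Icc 0 T) p v0 u0 θ0 v u θ vx vt ux ut uxx θx θt θxx)
    {s : ℝ} (hs : s ∈ Icc 0 T) : energyFlux β p v u θ ux θx 1 s = 0 := by
  simp [energyFlux, sol.bc_right s hs, sol.bc_θ_right s hs]

theorem hasDerivWithinAt_energyFlux
    (sol : OPSol β (Icc 0 T) p v0 u0 θ0 v u θ vx vt ux ut uxx θx θt θxx)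
    {x s : ℝ} (hs : s ∈ Icc 0 T) (hx : x ∈ Icc (0:ℝ) 1) :
    HasDerivWithinAt (fun y => energyFlux β p v u θ ux θx y s)
      (energyRate p p' v u θ vt ut θt x s - p' s * v x s + dissipation β v θ ux θx x s)
      (Icc 0 1) x := by
  obtain ⟨q, hq, hq_eq⟩ := sol.eq_energy s hs x hx
  obtain rfl : q = θt x s + θ x s / v x s * ux x s - ux x s ^ 2 / v x s := by linarith
  have hv := (sol.v_pos x hx s hs).ne'
  have hθ := (sol.θ_pos x hx s hs).ne'
  refine (((sol.hux s hs x hx).mul ((sol.eq_mom s hs x hx).add_const (p s))).add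
    (hq.mul (((sol.hθx s hs x hx).inv hθ).const_sub 1))).congr_deriv ?_
  rw [energyRate, dissipation, sol.eq_mass x hx s hs]
  simp only [Pi.inv_apply]
  field_simp
  ring

theorem integral_energyRate
    (sol : OPSol β (Icc 0 T) p v0 u0 θ0 v u θ vx vt ux ut uxx θx θt θxx)
    (hP : PressureC1 p p') {s : ℝ} (hs : s ∈ Icc 0 T) :
    ∫ x in (0:ℝ)..1, energyRate p p' v u θ vt ut θt x s =
      p' s * (∫ x in (0:ℝ)..1, v x s) - ∫ x in (0:ℝ)..1, dissipation β v θ ux θx x s := by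
  have hrate := (sol.continuousOn_energyRate hP).uncurry_right s hs
  have hv : ContinuousOn (fun x => v x s) (Icc 0 1) := sol.cont_v.uncurry_right s hs
  have hD := sol.continuousOn_dissipation.uncurry_right s hs
  have hflux := integral_eq_sub_of_hasDerivWithinAt_Icc zero_le_one
    (fun x hx => sol.hasDerivWithinAt_energyFlux (p' := p') hs hx)
    ((hrate.sub (continuousOn_const.mul hv)).add hD)
  have ii : ∀ {f : ℝ → ℝ}, ContinuousOn f (Icc 0 1) → IntervalIntegrable f volume 0 1 :=
    fun hf => hf.intervalIntegrable_of_Icc zero_le_one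
  rw [sol.energyFlux_one hs, sol.energyFlux_zero hs, sub_zero,
    intervalIntegral.integral_add (ii (by fun_prop)) (ii hD),
    intervalIntegral.integral_sub (ii hrate) (ii (by fun_prop)),
    intervalIntegral.integral_const_mul] at hflux
  linarith

theorem energy_identity (sol : OPSol β (Icc 0 T) p v0 u0 θ0 v u θ vx vt ux ut uxx θx θt θxx)
    (hP : PressureC1 p p') {t : ℝ} (ht : t ∈ Icc 0 T) :
    (∫ x in (0:ℝ)..1, energyDensity p v u θ x t) +
        ∫ s in (0:ℝ)..t, ∫ x in (0:ℝ)..1, dissipation β v θ ux θx x s =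
      (∫ x in (0:ℝ)..1, energyDensity p v u θ x 0) +
        ∫ s in (0:ℝ)..t, p' s * ∫ x in (0:ℝ)..1, v x s := by
  have hT : 0 ≤ T := ht.1.trans ht.2
  have hsub : Icc 0 t ⊆ Icc 0 T := Icc_subset_Icc le_rfl ht.2
  have hrate := sol.continuousOn_energyRate hP
  have hftc : ∀ x ∈ Icc (0:ℝ) 1, ∫ s in (0:ℝ)..t, energyRate p p' v u θ vt ut θt x s =
      energyDensity p v u θ x t - energyDensity p v u θ x 0 := fun x hx =>
    integral_eq_sub_of_hasDerivWithinAt_Icc ht.1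
      (fun s hs => (sol.hasDerivWithinAt_energyDensity hP hx (hsub hs)).mono hsub)
      ((hrate.uncurry_left x hx).mono hsub)
  have hW : ContinuousOn (fun s => p' s * ∫ x in (0:ℝ)..1, v x s) (Icc 0 T) :=
    (hP.2.1.mono Icc_subset_Ici_self).mul
      (continuousOn_intervalIntegral_of_continuousOn_prod zero_le_one hT sol.cont_v)
  have hD := continuousOn_intervalIntegral_of_continuousOn_prod zero_le_one hT
    sol.continuousOn_dissipation
  have key : (∫ x in (0:ℝ)..1, energyDensity p v u θ x t) -
      ∫ x in (0:ℝ)..1, energyDensity p v u θ x 0 =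
      ∫ s in (0:ℝ)..t, ∫ x in (0:ℝ)..1, energyRate p p' v u θ vt ut θt x s := by
    rw [← intervalIntegral.integral_sub
        ((sol.continuousOn_energyDensity ht).intervalIntegrable_of_Icc zero_le_one)
        ((sol.continuousOn_energyDensity (left_mem_Icc.2 hT)).intervalIntegrable_of_Icc
          zero_le_one),
      ← intervalIntegral_swap_of_continuousOn zero_le_one ht.1
        (hrate.mono (prod_mono subset_rfl hsub))]
    refine integral_congr fun x hx => (hftc x ?_).symm
    rwa [uIcc_of_le zero_le_one] at hx
  rw [integral_congr fun s hs =>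
      sol.integral_energyRate hP (hsub (by rwa [uIcc_of_le ht.1] at hs)),
    intervalIntegral.integral_sub ((hW.mono hsub).intervalIntegrable_of_Icc ht.1)
      ((hD.mono hsub).intervalIntegrable_of_Icc ht.1)] at key
  linarith

theorem integral_energyDensity_ge
    (sol : OPSol β (Icc 0 T) p v0 u0 θ0 v u θ vx vt ux ut uxx θx θt θxx) {m t : ℝ}
    (hm : 0 < m) (hp : m ≤ p t) (ht : t ∈ Icc 0 T) :
    m / 2 * (∫ x in (0:ℝ)..1, v x t) + (2 + log (m / 2)) ≤
      ∫ x in (0:ℝ)..1, energyDensity p v u θ x t := by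
  have hv : ContinuousOn (fun x => v x t) (Icc 0 1) := sol.cont_v.uncurry_right t ht
  calc m / 2 * (∫ x in (0:ℝ)..1, v x t) + (2 + log (m / 2))
      = ∫ x in (0:ℝ)..1, (m / 2 * v x t + (2 + log (m / 2))) := by
        rw [intervalIntegral.integral_add (f := fun x => m / 2 * v x t)
          ((continuousOn_const.mul hv).intervalIntegrable_of_Icc zero_le_one)
          intervalIntegrable_const, intervalIntegral.integral_const_mul]
        simp
    _ ≤ ∫ x in (0:ℝ)..1, energyDensity p v u θ x t :=
      intervalIntegral.integral_mono_on zero_le_one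
        (((continuousOn_const.mul hv).add continuousOn_const).intervalIntegrable_of_Icc
          zero_le_one)
        ((sol.continuousOn_energyDensity ht).intervalIntegrable_of_Icc zero_le_one)
        fun x hx => le_energyDensity hm hp (sol.v_pos x hx t ht) (sol.θ_pos x hx t ht)

theorem integral_sq_initial_le
    (sol : OPSol β (Icc 0 T) p v0 u0 θ0 v u θ vx vt ux ut uxx θx θt θxx) (hT : 0 ≤ T)
    {E δ : ℝ} (hED : EdeltaBounded E δ v0 u0 θ0 vx ux θx) :
    ∫ x in (0:ℝ)..1, u x 0 ^ 2 ≤ E ^ 2 ∧ ∫ x in (0:ℝ)..1, v x 0 ^ 2 ≤ E ^ 2 ∧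
      ∫ x in (0:ℝ)..1, θ x 0 ^ 2 ≤ E ^ 2 := by
  have h0 : (0:ℝ) ∈ Icc 0 T := left_mem_Icc.2 hT
  have hv := H1norm_congr (f' := fun x => vx x 0) sol.init_v
  have hu := H1norm_congr (f' := fun x => ux x 0) sol.init_u
  have hθ := H1norm_congr (f' := fun x => θx x 0) sol.init_θ
  have hv₀ : 0 ≤ H1norm (fun x => v x 0) fun x => vx x 0 := sqrt_nonneg _
  have hu₀ : 0 ≤ H1norm (fun x => u x 0) fun x => ux x 0 := sqrt_nonneg _
  have hθ₀ : 0 ≤ H1norm (fun x => θ x 0) fun x => θx x 0 := sqrt_nonneg _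
  refine ⟨integral_sq_le_sq_of_H1norm_le (sol.cont_u.uncurry_right 0 h0)
      (sol.cont_ux.uncurry_right 0 h0) ?_,
    integral_sq_le_sq_of_H1norm_le (sol.cont_v.uncurry_right 0 h0)
      (sol.cont_vx.uncurry_right 0 h0) ?_,
    integral_sq_le_sq_of_H1norm_le (sol.cont_θ.uncurry_right 0 h0)
      (sol.cont_θx.uncurry_right 0 h0) ?_⟩ <;> linarith [hED.1]

theorem integral_energyDensity_zero_le
    (sol : OPSol β (Icc 0 T) p v0 u0 θ0 v u θ vx vt ux ut uxx θx θt θxx) (hT : 0 ≤ T)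
    {E δ M : ℝ} (hδ : 0 < δ) (hp₀ : 0 ≤ p 0) (hpM : p 0 ≤ M)
    (hED : EdeltaBounded E δ v0 u0 θ0 vx ux θx) :
    ∫ x in (0:ℝ)..1, energyDensity p v u θ x 0 ≤
      E ^ 2 / 2 + (1 + M) * (1 + E ^ 2) / 2 - 2 * log δ := by
  obtain ⟨hu2, hv2, hθ2⟩ := sol.integral_sq_initial_le hT hED
  have h0 : (0:ℝ) ∈ Icc 0 T := left_mem_Icc.2 hT
  have hu : ContinuousOn (fun x => u x 0) (Icc 0 1) := sol.cont_u.uncurry_right 0 h0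
  have hv : ContinuousOn (fun x => v x 0) (Icc 0 1) := sol.cont_v.uncurry_right 0 h0
  have hθ : ContinuousOn (fun x => θ x 0) (Icc 0 1) := sol.cont_θ.uncurry_right 0 h0
  set K := (1 + M) / 2 - 2 * log δ with hK
  have ii : ∀ {f : ℝ → ℝ}, ContinuousOn f (Icc 0 1) → IntervalIntegrable f volume 0 1 :=
    fun hf => hf.intervalIntegrable_of_Icc zero_le_one
  calc ∫ x in (0:ℝ)..1, energyDensity p v u θ x 0
      ≤ ∫ x in (0:ℝ)..1, (u x 0 ^ 2 / 2 + θ x 0 ^ 2 / 2 + M / 2 * v x 0 ^ 2 + K) :=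
        intervalIntegral.integral_mono_on zero_le_one (ii (sol.continuousOn_energyDensity h0))
          (ii (by fun_prop)) fun x hx => energyDensity_le hδ
            ((hED.2.1 x hx).trans_eq (sol.init_v x hx).symm)
            ((hED.2.2 x hx).trans_eq (sol.init_θ x hx).symm) hp₀ hpM
    _ = (∫ x in (0:ℝ)..1, u x 0 ^ 2) / 2 + (∫ x in (0:ℝ)..1, θ x 0 ^ 2) / 2 +
          M / 2 * (∫ x in (0:ℝ)..1, v x 0 ^ 2) + K := by
        rw [intervalIntegral.integral_add (ii (by fun_prop)) intervalIntegrable_const,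
          intervalIntegral.integral_add (ii (by fun_prop)) (ii (by fun_prop)),
          intervalIntegral.integral_add (ii (by fun_prop)) (ii (by fun_prop)),
          intervalIntegral.integral_div, intervalIntegral.integral_div,
          intervalIntegral.integral_const_mul]
        simp
    _ ≤ E ^ 2 / 2 + (1 + M) * (1 + E ^ 2) / 2 - 2 * log δ := by
        have := mul_le_mul_of_nonneg_left hv2 (by linarith : (0:ℝ) ≤ M / 2)
        linarith [hK]

theorem integral_dissipation_nonneg
    (sol : OPSol β (Icc 0 T) p v0 u0 θ0 v u θ vx vt ux ut uxx θx θt θxx) {t : ℝ}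
    (ht : t ∈ Icc 0 T) :
    0 ≤ ∫ s in (0:ℝ)..t, ∫ x in (0:ℝ)..1, dissipation β v θ ux θx x s :=
  intervalIntegral.integral_nonneg ht.1 fun s hs =>
    have hs' : s ∈ Icc 0 T := ⟨hs.1, hs.2.trans ht.2⟩
    intervalIntegral.integral_nonneg zero_le_one fun x hx =>
      dissipation_nonneg (sol.v_pos x hx s hs') (sol.θ_pos x hx s hs')

theorem integral_energy_le_integral_energyDensity_add
    (sol : OPSol β (Icc 0 T) p v0 u0 θ0 v u θ vx vt ux ut uxx θx θt θxx) {t : ℝ}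
    (ht : t ∈ Icc 0 T) (hp : 0 ≤ p t) :
    ∫ x in (0:ℝ)..1, (u x t ^ 2 / 2 + (v x t - log (v x t)) + (θ x t - log (θ x t))) ≤
      (∫ x in (0:ℝ)..1, energyDensity p v u θ x t) + ∫ x in (0:ℝ)..1, v x t := by
  have hv : ContinuousOn (fun x => v x t) (Icc 0 1) := sol.cont_v.uncurry_right t ht
  have he := sol.continuousOn_energyDensity ht
  rw [← intervalIntegral.integral_add (he.intervalIntegrable_of_Icc zero_le_one)
    (hv.intervalIntegrable_of_Icc zero_le_one)]
  refine intervalIntegral.integral_mono_on zero_le_one ?_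
    ((he.add hv).intervalIntegrable_of_Icc zero_le_one) fun x hx => ?_
  · have hu : ContinuousOn (fun x => u x t) (Icc 0 1) := sol.cont_u.uncurry_right t ht
    have hθ : ContinuousOn (fun x => θ x t) (Icc 0 1) := sol.cont_θ.uncurry_right t ht
    have hv₀ : ∀ x ∈ Icc (0:ℝ) 1, v x t ≠ 0 := fun x hx => (sol.v_pos x hx t ht).ne'
    have hθ₀ : ∀ x ∈ Icc (0:ℝ) 1, θ x t ≠ 0 := fun x hx => (sol.θ_pos x hx t ht).ne'
    exact ContinuousOn.intervalIntegrable_of_Icc zero_le_one (by fun_prop (disch := assumption))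
  · have := mul_nonneg hp (sol.v_pos x hx t ht).le
    simp only [energyDensity]
    linarith

end OPSol

theorem basic_energy_estimate_general
    (β E δ m M I : ℝ) (hδ : 0 < δ)
    (hm : 0 < m) :
    ∃ C₀ > 0, ∀ T > 0, ∀ p p' v0 u0 θ0 : ℝ → ℝ,
      ∀ v u θ vx vt ux ut uxx θx θt θxx : ℝ → ℝ → ℝ,
      PressureC1 p p' →
      (∀ t ∈ Icc (0:ℝ) T, m ≤ p t ∧ p t ≤ M) →
      (∫ t in (0:ℝ)..T, |p' t|) ≤ I →
      OPSol β (Icc 0 T) p v0 u0 θ0 v u θ vx vt ux ut uxx θx θt θxx →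
      EdeltaBounded E δ v0 u0 θ0 vx ux θx →
      ∀ t ∈ Icc (0:ℝ) T,
        (∫ x in (0:ℝ)..1,
            ((u x t) ^ 2 / 2 + (v x t - Real.log (v x t)) + (θ x t - Real.log (θ x t)))) +
          (∫ s in (0:ℝ)..T, ∫ x in (0:ℝ)..1,
            (θ x s ^ β * (θx x s) ^ 2 / (v x s * (θ x s) ^ 2) +
              (ux x s) ^ 2 / (v x s * θ x s))) ≤ C₀ := by
  set A := E ^ 2 / 2 + (1 + M) * (1 + E ^ 2) / 2 - 2 * log δ
  set L := 2 + log (m / 2)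
  refine ⟨max (L + (m + 1) * (|2 / m * (A - L)| * exp (2 / m * I))) 1,
    lt_max_of_lt_right one_pos, ?_⟩
  intro T hT p p' v0 u0 θ0 v u θ vx vt ux ut uxx θx θt θxx hP hpm hpI sol hED t ht
  have h0 : (0:ℝ) ∈ Icc 0 T := left_mem_Icc.2 hT.le
  have hbound := energy_bound_of_identity
    (𝓔 := fun s => ∫ x in (0:ℝ)..1, energyDensity p v u θ x s) hm
    (continuousOn_intervalIntegral_of_continuousOn_prod zero_le_one hT.le sol.cont_v)
    (hP.2.1.mono Icc_subset_Ici_self)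
    (fun s hs => intervalIntegral.integral_nonneg zero_le_one fun x hx => (sol.v_pos x hx s hs).le)
    (fun s hs => sol.integral_dissipation_nonneg hs) (fun s hs => sol.energy_identity hP hs)
    (fun s hs => sol.integral_energyDensity_ge hm (hpm s hs).1 hs)
    (sol.integral_energyDensity_zero_le hT.le hδ (hP.2.2 0 self_mem_Ici).le (hpm 0 h0).2 hED)
    hpI ht
  calc _ ≤ _ := add_le_add (sol.integral_energy_le_integral_energyDensity_add ht
        (hP.2.2 t ht.1).le) le_rfl
    _ ≤ _ := hbound
    _ ≤ _ := le_max_left _ _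

/-- basic energy estimate. -/
theorem basic_energy_estimate
    (β E δ m M I : ℝ) (hβ : 0 < β) (hE : 0 < E) (hδ : 0 < δ)
    (hm : 0 < m) (hM : 0 < M) (hI : 0 < I) :
    ∃ C₀ > 0, ∀ T > 0, ∀ p p' v0 u0 θ0 : ℝ → ℝ,
      ∀ v u θ vx vt ux ut uxx θx θt θxx : ℝ → ℝ → ℝ,
      PressureC1 p p' →
      (∀ t ∈ Icc (0:ℝ) T, m ≤ p t ∧ p t ≤ M) →
      (∫ t in (0:ℝ)..T, |p' t|) ≤ I →
      OPSol β (Icc 0 T) p v0 u0 θ0 v u θ vx vt ux ut uxx θx θt θxx →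
      EdeltaBounded E δ v0 u0 θ0 vx ux θx →
      ∀ t ∈ Icc (0:ℝ) T,
        (∫ x in (0:ℝ)..1,
            ((u x t) ^ 2 / 2 + (v x t - Real.log (v x t)) + (θ x t - Real.log (θ x t)))) +
          (∫ s in (0:ℝ)..T, ∫ x in (0:ℝ)..1,
            (θ x s ^ β * (θx x s) ^ 2 / (v x s * (θ x s) ^ 2) +
              (ux x s) ^ 2 / (v x s * θ x s))) ≤ C₀ :=
  basic_energy_estimate_general β E δ m M I hδ hm
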